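/- Let n ≥ 2 be an integer, p > 1 and θ ≥ 0 real numbers, A a symmetric n×n real matrix, and s a real number. Set h := (p−1)·A₁₁ + Σ_{i=2}^n A_{ii} + s, and assume h ≥ 0 and s² ≤ θ²·h. Then Σ_{i,j=1}^n A_{ij}² ≥ h²/(2n−1) − 2(p−1)·h·A₁₁/(2n−1) − θ²·h/n + (1 + (p−1)²/(2n−1))·A₁₁² + 2·Σ_{i=2}^n A_{1i}². -/

import Mathlib

open Finset

/-!
Write `X := h - (p - 1) A₁₁ = Σ_{i≥2} A_{ii} + s`. Sedrakyan's inequality with weights `n - 1`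
and `n` gives `X² / (2n - 1) ≤ (Σ_{i≥2} A_{ii})² / (n - 1) + s² / n`, and Cauchy–Schwarz bounds
the first term by `Σ_{i≥2} A_{ii}²`. The right-hand side of the claim is
`X² / (2n - 1) - θ² h / n + A₁₁² + 2 Σ_{i≥2} A_{1i}²`, while symmetry of `A` shows that
`Σ_{i,j} A_{ij}²` contains `A₁₁² + Σ_{i≥2} A_{ii}² + 2 Σ_{i≥2} A_{1i}²`.
-/

theorem add_sq_div_add_le_sq_div_add_sq_div {R : Type*} [Field R] [LinearOrder R]
    [IsStrictOrderedRing R] (x y : R) {a b : R} (ha : 0 < a) (hb : 0 < b) :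
    (x + y) ^ 2 / (a + b) ≤ x ^ 2 / a + y ^ 2 / b := by
  simpa [Fin.sum_univ_two] using
    sq_sum_div_le_sum_sq_div univ ![x, y] (g := ![a, b]) (by simp [Fin.forall_fin_two, ha, hb])

theorem Finset.sq_sum_div_card_le_sum_sq {ι R : Type*} [Field R] [LinearOrder R]
    [IsStrictOrderedRing R] (s : Finset ι) (f : ι → R) :
    (∑ i ∈ s, f i) ^ 2 / #s ≤ ∑ i ∈ s, f i ^ 2 := by
  simpa using sq_sum_div_le_sum_sq_div s f (g := fun _ ↦ 1) (by simp)

theorem Matrix.IsSymm.sq_diag_add_two_mul_sum_row_sq_le_sum_sq {ι R : Type*} [Fintype ι]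
    [DecidableEq ι] [CommRing R] [LinearOrder R] [IsStrictOrderedRing R]
    {A : Matrix ι ι R} (hA : A.IsSymm) (k : ι) :
    A k k ^ 2 + ∑ i ∈ univ.erase k, A i i ^ 2 + 2 * ∑ i ∈ univ.erase k, A k i ^ 2 ≤
      ∑ i, ∑ j, A i j ^ 2 := by
  have row_k : ∑ j, A k j ^ 2 = A k k ^ 2 + ∑ i ∈ univ.erase k, A k i ^ 2 :=
    (add_sum_erase _ _ (mem_univ k)).symm
  have other_rows : ∑ i ∈ univ.erase k, (A i i ^ 2 + A k i ^ 2) ≤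
      ∑ i ∈ univ.erase k, ∑ j, A i j ^ 2 := by
    refine sum_le_sum fun i hi ↦ ?_
    calc A i i ^ 2 + A k i ^ 2 = ∑ j ∈ {i, k}, A i j ^ 2 := by
          rw [sum_pair (ne_of_mem_erase hi), hA.apply k i]
      _ ≤ ∑ j, A i j ^ 2 := sum_le_univ_sum_of_nonneg fun _ ↦ sq_nonneg _
  rw [← add_sum_erase _ _ (mem_univ k), row_k]
  rw [sum_add_distrib] at other_rows
  linarith

/-- Pointwise linear-algebra core of estimate (4.6): for a symmetric `n × n` matrix `A`
(`n ≥ 2`), `p > 1`, `θ ≥ 0`, `s ∈ ℝ`, with `h = (p−1)A₁₁ + Σ_{i≥2} A_{ii} + s ≥ 0` and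
`s² ≤ θ²h`, one has
`Σ_{i,j} A_{ij}² ≥ h²/(2n−1) − 2(p−1)hA₁₁/(2n−1) − θ²h/n
  + (1 + (p−1)²/(2n−1))A₁₁² + 2 Σ_{i≥2} A_{1i}²`. -/
theorem hessian_estimate' (n : ℕ) (hn : 2 ≤ n) (p θ : ℝ)
    (A : Matrix (Fin n) (Fin n) ℝ) (hA : A.IsSymm) (s : ℝ) (h : ℝ)
    (hh : h = (p - 1) * A ⟨0, by omega⟩ ⟨0, by omega⟩ +
      ∑ i ∈ univ.erase ⟨0, by omega⟩, A i i + s)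
    (hs : s ^ 2 ≤ θ ^ 2 * h) :
    ∑ i : Fin n, ∑ j : Fin n, (A i j) ^ 2 ≥
      h ^ 2 / (2 * (n : ℝ) - 1)
        - 2 * (p - 1) * h * A ⟨0, by omega⟩ ⟨0, by omega⟩ / (2 * (n : ℝ) - 1)
        - θ ^ 2 * h / (n : ℝ)
        + (1 + (p - 1) ^ 2 / (2 * (n : ℝ) - 1)) * (A ⟨0, by omega⟩ ⟨0, by omega⟩) ^ 2
        + 2 * ∑ i ∈ univ.erase ⟨0, by omega⟩, (A ⟨0, by omega⟩ i) ^ 2 := by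
  set k : Fin n := ⟨0, by omega⟩
  have hn1 : (1 : ℝ) < n := by exact_mod_cast hn
  have hcard : (#(univ.erase k) : ℝ) = n - 1 := by
    rw [card_erase_of_mem (mem_univ k), card_univ, Fintype.card_fin, Nat.cast_pred (by omega)]
  have diag : (h - (p - 1) * A k k) ^ 2 / (2 * n - 1) ≤
      ∑ i ∈ univ.erase k, A i i ^ 2 + θ ^ 2 * h / n := calc
    _ = (∑ i ∈ univ.erase k, A i i + s) ^ 2 / ((n - 1) + n) := by rw [hh]; ring_nf
    _ ≤ (∑ i ∈ univ.erase k, A i i) ^ 2 / (n - 1) + s ^ 2 / n :=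
      add_sq_div_add_le_sq_div_add_sq_div _ _ (by linarith) (by linarith)
    _ ≤ _ := by
      gcongr
      exact hcard ▸ sq_sum_div_card_le_sum_sq (univ.erase k) fun i ↦ A i i
  have rhs : h ^ 2 / (2 * (n : ℝ) - 1) - 2 * (p - 1) * h * A k k / (2 * (n : ℝ) - 1)
        - θ ^ 2 * h / n + (1 + (p - 1) ^ 2 / (2 * (n : ℝ) - 1)) * A k k ^ 2
        + 2 * ∑ i ∈ univ.erase k, A k i ^ 2
      = (h - (p - 1) * A k k) ^ 2 / (2 * n - 1) - θ ^ 2 * h / n + A k k ^ 2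
        + 2 * ∑ i ∈ univ.erase k, A k i ^ 2 := by
    field_simp
    ring
  rw [ge_iff_le, rhs]
  linarith [hA.sq_diag_add_two_mul_sum_row_sq_le_sum_sq k]
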